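/- Type II, Blue winning condition: on a board whose only long piles are exactly one long r-pile ρ and one long b-pile β, with Blue active, if m_b > 0 and m_b + |β|_b > n_r when Blue's turn starts, then Blue wins by applying strategy S at every round. -/

import Mathlib

/-!  A model of the two-player, two-color endgame of *So Long Sucker*.

The two remaining players are Blue and Red, identified with their colors.
A pile is a finite sequence of chips (head = top chip).  A game state
records the board, the number of chips of each color held by each player,
and the active player. -/

/-- The two chip colors (also naming the two remaining players). -/
inductive Color : Type
  | b : Color
  | r : Color
deriving DecidableEq, Repr

/-- The opponent's color. -/
def Color.other : Color → Color
  | Color.b => Color.r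
  | Color.r => Color.b

/-- A pile of chips; the head of the list is the top chip. -/
abbrev Pile := List Color

/-- A game state: the board (a list of piles), the chip counts
`chips p c` = number of `c`-colored chips held by player `p`,
and the active player. -/
structure GState where
  board : List Pile
  chips : Color → Color → ℕ
  active : Color

/-- Total number of chips in player `p`'s possession. -/
def totalChips (s : GState) (p : Color) : ℕ :=
  s.chips p Color.b + s.chips p Color.r

/-- The Next Player Rule in the two-player, two-color endgame, as a function
of the pile played on (before the placement) and the color of the placed
chip: if the placement triggers a capture, the capturing player moves next;
otherwise the player of the other color than the placed chip moves next
(this is the unique player allowed by the Next Player Rule). -/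
def nextActive (π : Pile) (c : Color) : Color :=
  if π.head? = some c then c else c.other

/-- Placement of a chip of color `c` on pile number `i` by the active
player, with the Capture Rule and Next Player Rule applied. -/
inductive PlaceOn (i : ℕ) : GState → GState → Prop
  | noCapture (s : GState) (c : Color)
      (hi : i < s.board.length)
      (hc : 0 < s.chips s.active c)
      (hcap : (s.board.getD i []).head? ≠ some c) :
      PlaceOn i s
        { board := s.board.set i (c :: s.board.getD i []),
          chips := fun p x =>
            s.chips p x - (if p = s.active ∧ x = c then 1 else 0),
          active := c.other }
  | capture (s : GState) (c : Color) (d : Color)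
      (hi : i < s.board.length)
      (hc : 0 < s.chips s.active c)
      (hcap : (s.board.getD i []).head? = some c)
      (hd : d ∈ c :: s.board.getD i []) :
      PlaceOn i s
        { board := s.board.set i [],
          chips := fun p x =>
            (s.chips p x - (if p = s.active ∧ x = c then 1 else 0))
              + (if p = c then
                  (c :: s.board.getD i []).count x - (if d = x then 1 else 0)
                 else 0),
          active := c }

/-- One legal move of the active player: placing a chip on some pile
(resolving captures), discarding a prisoner, or donating a prisoner
to the opponent. -/
inductive Step : GState → GState → Prop
  | place (i : ℕ) (s s' : GState) (h : PlaceOn i s s') : Step s s'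
  | discardPrisoner (s : GState)
      (hc : 0 < s.chips s.active s.active.other) :
      Step s
        { board := s.board,
          chips := fun p x =>
            s.chips p x - (if p = s.active ∧ x = s.active.other then 1 else 0),
          active := s.active }
  | donatePrisoner (s : GState)
      (hc : 0 < s.chips s.active s.active.other) :
      Step s
        { board := s.board,
          chips := fun p x =>
            if x = s.active.other then
              (if p = s.active then s.chips p x - 1 else s.chips p x + 1)
            else s.chips p x,
          active := s.active }

/-- Player `p` has a winning strategy from state `s`: either the opponent is
to move with no chips (and `p` refuses to donate), so the opponent is
eliminated and `p` wins; or it is `p`'s turn and some move of `p` leads to a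
winning position; or it is the opponent's turn and every move of the opponent
leads to a position winning for `p`. -/
inductive WinsFor (p : Color) : GState → Prop
  | elim (s : GState) (h : s.active ≠ p) (h0 : totalChips s s.active = 0) :
      WinsFor p s
  | mine (s s' : GState) (h : s.active = p) (hs : Step s s')
      (hw : WinsFor p s') : WinsFor p s
  | theirs (s : GState) (h : s.active ≠ p) (h0 : 0 < totalChips s s.active)
      (hw : ∀ s', Step s s' → WinsFor p s') : WinsFor p s

/-- The index of the pile on which strategy `S` places its guard:
the longest pile whose top chip has the opponent's color `q`,
or an empty pile if there is no `q`-pile. -/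
def targetIdx (q : Color) (l : List Pile) : ℕ :=
  let opp := l.filter (fun π => π.head? == some q)
  if opp.isEmpty then
    l.findIdx (fun π => π.isEmpty)
  else
    l.findIdx (fun π =>
      (π.head? == some q) &&
        (π.length == (opp.map List.length).foldr Nat.max 0))

/-- The state resulting from the active player `p` playing one full round of
strategy `S`: capture every `p`-pile (discarding an opponent chip from a
captured pile when it contains one, and a `p` chip otherwise), discard all
prisoners, and finally place one guard on the longest opponent-colored pile,
or on an empty pile if there is none.  The turn then passes to the
opponent. -/
def SRound (s : GState) : GState :=
  let p := s.active
  let q := p.other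
  let capt := s.board.filter (fun π => π.head? == some p)
  let b1 := s.board.map (fun π => if π.head? == some p then ([] : Pile) else π)
  let g1 := s.chips p p +
      (capt.map (fun π =>
        if π.contains q then π.count p else π.count p - 1)).sum
  let i := targetIdx q b1
  { board := b1.set i (p :: b1.getD i []),
    chips := fun pl x =>
      if pl = p then (if x = p then g1 - 1 else 0) else s.chips pl x,
    active := q }

/-- Player `p` wins by applying strategy `S` at each of `p`'s rounds,
whatever the opponent plays. -/
inductive WinsWithS (p : Color) : GState → Prop
  | elim (s : GState) (h : s.active ≠ p) (h0 : totalChips s s.active = 0) :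
      WinsWithS p s
  | mine (s : GState) (h : s.active = p) (hg : 0 < s.chips p p)
      (hw : WinsWithS p (SRound s)) : WinsWithS p s
  | theirs (s : GState) (h : s.active ≠ p) (h0 : 0 < totalChips s s.active)
      (hw : ∀ s', Step s s' → WinsWithS p s') : WinsWithS p s

/-- Every pile on the board is an alternating sequence of colors. -/
def Alternating (l : List Pile) : Prop := ∀ π ∈ l, π.Chain' (· ≠ ·)

/-- The long piles (length at least 2) whose top chip has color `c`. -/
def longPiles (c : Color) (l : List Pile) : List Pile :=
  l.filter (fun π => decide (2 ≤ π.length) && (π.head? == some c))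

/-- The sum, over all long `c`-piles, of the number of `c` chips they
contain (e.g. `Σᵢ |ρᵢ|_r` for `c = r`). -/
def longSum (c : Color) (l : List Pile) : ℕ :=
  ((longPiles c l).map (fun π => π.count c)).sum

/-- The maximum, over all long `c`-piles, of the number of `c` chips they
contain (`0` if there is no long `c`-pile). -/
def longMax (c : Color) (l : List Pile) : ℕ :=
  ((longPiles c l).map (fun π => π.count c)).foldr Nat.max 0

/-- The total number of chips in the game (in hands and on the board). -/
def chipCount (s : GState) : ℕ :=
  totalChips s Color.b + totalChips s Color.r + (s.board.map List.length).sum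

/-!
Blue keeps an invariant. When Red is to move, there is no long r-pile and Red holds at most as
many red chips as Blue holds guards (`RedInv`). When Blue is to move, there is at most one long
r-pile, Blue holds a guard, and Red's red chips are fewer than Blue's guards plus the blue chips
Blue is about to capture (`BlueInv`). A round of `S` turns `BlueInv` into `RedInv`: the guard goes
on the longest r-pile, which is the only long one. From `RedInv`, every Red move leads back to
`RedInv` or to `BlueInv`: a red chip placed without capture costs Red one of its red chips while
Blue's guards stay, a capture by Red can only take a singleton `[r]` and returns Red its chip, and
a blue chip placed on a b-pile hands that pile to Blue.

Every Red move strictly decreases the number of chips in play plus those in Red's hand, and a round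
of `S` does not increase it, so Red eventually has to move without chips. Initially, every long
b-pile is alternating, so capturing it yields all of its blue chips, and the hypothesis gives
`BlueInv`.
-/

theorem List.sum_map_length_set {α : Type*} {l : List (List α)} {i : ℕ} (a : List α)
    (h : i < l.length) :
    ((l.set i a).map length).sum + (l.getD i []).length = (l.map length).sum + a.length := by
  induction l generalizing i with
  | nil => simp at h
  | cons x t ih =>
    cases i with
    | zero =>
      simp only [set_cons_zero, map_cons, sum_cons, getD_cons_zero]
      omega
    | succ n =>
      have := ih (i := n) (by simpa using h)
      simp only [set_cons_succ, map_cons, sum_cons, getD_cons_succ]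
      omega

theorem List.sum_map_length_set_cons_le {α : Type*} (l : List (List α)) (i : ℕ) (c : α) :
    ((l.set i (c :: l.getD i [])).map length).sum ≤ (l.map length).sum + 1 := by
  by_cases h : i < l.length
  · have := sum_map_length_set (c :: l.getD i []) h
    simp only [length_cons] at this
    omega
  · rw [set_eq_of_length_le (by omega)]
    omega

theorem List.sum_map_length_map_clear_add {α : Type*} (p : List α → Bool) (l : List (List α)) :
    ((l.map fun π => if p π then [] else π).map length).sum + ((l.filter p).map length).sum
      = (l.map length).sum := by
  induction l with
  | nil => rfl
  | cons x t ih =>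
    by_cases h : p x
    · simp only [map_cons, h, ↓reduceIte, filter_cons_of_pos, sum_cons, length_nil]
      omega
    · simp only [map_cons, h, Bool.false_eq_true, ↓reduceIte, filter_cons_of_neg, sum_cons,
        not_false_eq_true]
      omega

theorem List.countP_set_le_of_eq_false {α : Type*} {p : α → Bool} {a : α} (l : List α) (i : ℕ)
    (ha : p a = false) : (l.set i a).countP p ≤ l.countP p := by
  by_cases h : i < l.length
  · simp only [countP_set h, ha, Bool.false_eq_true, if_false]
    omega
  · rw [set_eq_of_length_le (by omega)]

theorem List.countP_set_le_add_one {α : Type*} (p : α → Bool) (l : List α) (i : ℕ) (a : α) :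
    (l.set i a).countP p ≤ l.countP p + 1 := by
  by_cases h : i < l.length
  · simp only [countP_set h]
    split_ifs <;> omega
  · rw [set_eq_of_length_le (by omega)]
    omega

theorem List.foldr_max_zero_mem {l : List ℕ} (h : l ≠ []) : l.foldr max 0 ∈ l :=
  maximum_mem (foldr_max_of_ne_nil h).symm

theorem Color.other_ne (c : Color) : c.other ≠ c := by cases c <;> decide

theorem Color.eq_other_of_ne {c d : Color} (h : d ≠ c) : d = c.other := by
  cases c <;> cases d <;> simp_all [Color.other]

theorem Color.count_b_add_count_r (l : List Color) :
    l.count Color.b + l.count Color.r = l.length := by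
  induction l with
  | nil => rfl
  | cons a t ih =>
    cases a <;> simp only [List.count_cons_self, List.length_cons,
      List.count_cons_of_ne (by decide : Color.b ≠ Color.r),
      List.count_cons_of_ne (by decide : Color.r ≠ Color.b)] <;> omega

def isLongPile (c : Color) (π : Pile) : Bool := decide (2 ≤ π.length) && (π.head? == some c)

theorem length_longPiles (c : Color) (l : List Pile) :
    (longPiles c l).length = l.countP (isLongPile c) :=
  List.countP_eq_length_filter.symm

theorem isLongPile_nil (c : Color) : isLongPile c [] = false := rfl

theorem isLongPile_cons_of_ne {c d : Color} (h : d ≠ c) (π : Pile) :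
    isLongPile c (d :: π) = false := by
  simp [isLongPile, h]

theorem eq_singleton_of_countP_isLongPile_eq_zero {c : Color} {l : List Pile} {π : Pile}
    (hl : l.countP (isLongPile c) = 0) (hπ : π ∈ l) (hhead : π.head? = some c) : π = [c] := by
  have hshort := List.countP_eq_zero.1 hl π hπ
  match π, hhead with
  | [_], rfl => rfl
  | _ :: _ :: _, hhead => simp_all [isLongPile]

theorem isLongPile_getD_targetIdx {c : Color} {l : List Pile} {π : Pile} (hπ : π ∈ l)
    (hlong : isLongPile c π) :
    targetIdx c l < l.length ∧ isLongPile c (l.getD (targetIdx c l) []) := by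
  set opp := l.filter (fun π => π.head? == some c) with hopp
  have hlong' : 2 ≤ π.length ∧ π.head? = some c := by simpa [isLongPile] using hlong
  have hπopp : π ∈ opp := List.mem_filter.2 ⟨hπ, by simp [hlong'.2]⟩
  have hne : opp ≠ [] := List.ne_nil_of_mem hπopp
  set M := (opp.map List.length).foldr Nat.max 0 with hM
  have hM2 : 2 ≤ M := List.le_max_of_le (List.mem_map_of_mem hπopp) hlong'.1
  obtain ⟨τ, hτopp, hτM⟩ :=
    List.mem_map.1 (List.foldr_max_zero_mem (l := opp.map List.length) (by simpa using hne))
  have hidx : targetIdx c l = l.findIdx (fun π => (π.head? == some c) && (π.length == M)) := by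
    rw [targetIdx]
    simp only [← hopp, ← hM]
    rw [if_neg (by simpa [List.isEmpty_iff] using hne)]
  have hlt : targetIdx c l < l.length := by
    rw [hidx, List.findIdx_lt_length]
    have hτc : τ.head? = some c := by simpa using (List.mem_filter.1 hτopp).2
    have hτM : τ.length = M := hτM
    exact ⟨τ, (List.mem_filter.1 hτopp).1, by simp [hτc, hτM]⟩
  refine ⟨hlt, ?_⟩
  have hfound := List.findIdx_getElem (w := hidx ▸ hlt)
  rw [List.getD_eq_getElem _ _ hlt]
  simp only [hidx, Bool.and_eq_true, beq_iff_eq] at hfound ⊢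
  simp [isLongPile, hfound.1, hfound.2, hM2]

theorem countP_isLongPile_set_targetIdx {c d : Color} (hd : d ≠ c) {l : List Pile}
    (h : l.countP (isLongPile c) ≤ 1) :
    (l.set (targetIdx c l) (d :: l.getD (targetIdx c l) [])).countP (isLongPile c) = 0 := by
  have hguard := isLongPile_cons_of_ne hd (l.getD (targetIdx c l) [])
  rcases Nat.eq_zero_or_pos (l.countP (isLongPile c)) with h0 | h0
  · have := List.countP_set_le_of_eq_false l (targetIdx c l) hguard
    omega
  · obtain ⟨π, hπ, hlong⟩ := List.countP_pos_iff.1 h0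
    obtain ⟨hlt, htarget⟩ := isLongPile_getD_targetIdx hπ hlong
    rw [List.getD_eq_getElem _ _ hlt] at htarget hguard
    rw [List.getD_eq_getElem _ _ hlt, List.countP_set hlt, htarget, hguard]
    simp only [if_true, Bool.false_eq_true, if_false]
    omega

theorem countP_isLongPile_map_clear {c d : Color} (hd : d ≠ c) (l : List Pile) :
    (l.map fun π => if π.head? == some d then [] else π).countP (isLongPile c)
      = l.countP (isLongPile c) := by
  rw [List.countP_map]
  refine List.countP_congr fun π _ => ?_
  by_cases h : π.head? = some d
  · simp [h, isLongPile, hd]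
  · simp [h]

theorem totalChips_eq (s : GState) (p : Color) :
    totalChips s p = s.chips p p + s.chips p p.other := by
  cases p <;> simp [totalChips, Color.other, add_comm]

theorem chipCount_eq (s : GState) (p : Color) :
    chipCount s = totalChips s p + totalChips s p.other + (s.board.map List.length).sum := by
  cases p <;> simp [chipCount, Color.other, add_comm]

def capturedPiles (s : GState) : List Pile := s.board.filter (fun π => π.head? == some s.active)

def clearedBoard (s : GState) : List Pile :=
  s.board.map (fun π => if π.head? == some s.active then [] else π)

def captureGain (p : Color) (π : Pile) : ℕ :=
  if π.contains p.other then π.count p else π.count p - 1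

def roundGain (s : GState) : ℕ := ((capturedPiles s).map (captureGain s.active)).sum

section sRound

variable (s : GState)

theorem sRound_active : (SRound s).active = s.active.other := rfl

theorem sRound_board : (SRound s).board = (clearedBoard s).set
    (targetIdx s.active.other (clearedBoard s))
    (s.active :: (clearedBoard s).getD (targetIdx s.active.other (clearedBoard s)) []) := rfl

theorem sRound_chips_self :
    (SRound s).chips s.active s.active = s.chips s.active s.active + roundGain s - 1 := by
  simp only [SRound, if_true]
  rfl

theorem sRound_chips_self_of_ne {x : Color} (hx : x ≠ s.active) :
    (SRound s).chips s.active x = 0 := by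
  simp [SRound, hx]

theorem sRound_chips_of_ne {p : Color} (hp : p ≠ s.active) (x : Color) :
    (SRound s).chips p x = s.chips p x := by
  simp [SRound, hp]

end sRound

theorem roundGain_le (s : GState) : roundGain s ≤ ((capturedPiles s).map List.length).sum :=
  List.sum_le_sum fun π _ => by
    unfold captureGain
    have := List.count_le_length (a := s.active) (l := π)
    split_ifs <;> omega

theorem chipCount_sRound_le (s : GState) (h : 0 < s.chips s.active s.active) :
    chipCount (SRound s) ≤ chipCount s := by
  have hself : totalChips (SRound s) s.active = s.chips s.active s.active + roundGain s - 1 := by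
    rw [totalChips_eq, sRound_chips_self, sRound_chips_self_of_ne _ (Color.other_ne _)]
    rfl
  have hother : totalChips (SRound s) s.active.other = totalChips s s.active.other := by
    simp only [totalChips, sRound_chips_of_ne _ (Color.other_ne _)]
  have hboard := List.sum_map_length_set_cons_le (clearedBoard s)
    (targetIdx s.active.other (clearedBoard s)) s.active
  have hsplit : ((clearedBoard s).map List.length).sum
      + ((capturedPiles s).map List.length).sum = (s.board.map List.length).sum :=
    List.sum_map_length_map_clear_add _ _
  have hgain := roundGain_le s
  rw [chipCount_eq _ s.active, chipCount_eq _ s.active, hself, hother, totalChips_eq s s.active,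
    sRound_board]
  omega

theorem longPiles_sRound (s : GState)
    (h : (longPiles s.active.other s.board).length ≤ 1) :
    (longPiles s.active.other (SRound s).board).length = 0 := by
  rw [length_longPiles] at h ⊢
  rw [sRound_board]
  apply countP_isLongPile_set_targetIdx (Color.other_ne _).symm
  rwa [clearedBoard, countP_isLongPile_map_clear (Color.other_ne _).symm]

theorem captureGain_eq_count {c : Color} {π : Pile} (halt : π.IsChain (· ≠ ·))
    (hlong : isLongPile c π) : captureGain c π = π.count c := by
  match π, halt, hlong with
  | a :: d :: t, halt, hlong =>
    have hac : a = c := by simpa [isLongPile] using hlong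
    subst hac
    have hd : d = a.other := Color.eq_other_of_ne (List.isChain_cons_cons.1 halt).1.symm
    simp [captureGain, hd]

theorem longSum_le_roundGain {s : GState} (halt : Alternating s.board) :
    longSum s.active s.board ≤ roundGain s := by
  have hsub : longPiles s.active s.board = (capturedPiles s).filter (isLongPile s.active) := by
    simp only [longPiles, capturedPiles, List.filter_filter, isLongPile, Bool.and_assoc,
      Bool.and_self]
  calc longSum s.active s.board
      = ((longPiles s.active s.board).map (captureGain s.active)).sum := by
        rw [longSum]
        congr 1
        refine List.map_congr_left fun π hπ => (captureGain_eq_count ?_ ?_).symm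
        · exact halt π (List.mem_filter.1 hπ).1
        · exact (List.mem_filter.1 hπ).2
    _ ≤ roundGain s := by
        rw [hsub, roundGain]
        exact List.Sublist.sum_le_sum (List.filter_sublist.map _) (fun _ _ => Nat.zero_le _)

def redWeight (s : GState) : ℕ := chipCount s + totalChips s Color.r

structure BlueInv (s : GState) : Prop where
  active : s.active = Color.b
  longR_le : (longPiles Color.r s.board).length ≤ 1
  guards_pos : 0 < s.chips Color.b Color.b
  red_lt : s.chips Color.r Color.r < s.chips Color.b Color.b + roundGain s

structure RedInv (s : GState) : Prop where
  active : s.active = Color.r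
  longR_eq : (longPiles Color.r s.board).length = 0
  red_le : s.chips Color.r Color.r ≤ s.chips Color.b Color.b

namespace BlueInv

variable {s : GState} (hs : BlueInv s)
include hs

theorem redWeight_sRound_le : redWeight (SRound s) ≤ redWeight s := by
  have hcount := chipCount_sRound_le s (hs.active ▸ hs.guards_pos)
  have hred := sRound_chips_of_ne s (p := Color.r) (by rw [hs.active]; decide)
  simp only [redWeight, totalChips, hred]
  omega

theorem sRound : RedInv (SRound s) where
  active := by rw [sRound_active, hs.active]; rfl
  longR_eq := by
    have := longPiles_sRound s (by rw [hs.active]; exact hs.longR_le)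
    rwa [hs.active] at this
  red_le := by
    have hself := sRound_chips_self s
    rw [hs.active] at hself
    rw [hself, sRound_chips_of_ne s (by rw [hs.active]; decide)]
    have := hs.red_lt
    omega

end BlueInv

namespace RedInv

variable {s : GState} (hs : RedInv s)
include hs

theorem placeOn {i : ℕ} {s' : GState} (hp : PlaceOn i s s') :
    redWeight s' < redWeight s ∧ (BlueInv s' ∨ RedInv s') := by
  obtain ⟨hact, hlong, hred⟩ := hs
  rw [length_longPiles] at hlong
  cases hp with
  | noCapture c hi hc hcap =>
    have hsum := List.sum_map_length_set (c :: s.board.getD i []) hi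
    rw [List.length_cons] at hsum
    rw [hact] at hc
    cases c with
    | r =>
      have hlong' := List.countP_set_le_add_one (isLongPile Color.r) s.board i
        (Color.r :: s.board.getD i [])
      refine ⟨?_, Or.inl ⟨rfl, by dsimp only; rw [length_longPiles]; omega, ?_, ?_⟩⟩ <;>
        simp only [redWeight, chipCount, totalChips, hact, reduceCtorEq, and_true, and_false,
          and_self, ↓reduceIte, tsub_zero] <;> omega
    | b =>
      have hlong' := List.countP_set_le_of_eq_false s.board i
        (isLongPile_cons_of_ne (by decide : Color.b ≠ Color.r) (s.board.getD i []))
      refine ⟨?_, Or.inr ⟨rfl, by dsimp only; rw [length_longPiles]; omega, ?_⟩⟩ <;>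
        simp only [redWeight, chipCount, totalChips, hact, reduceCtorEq, and_true, and_false,
          ↓reduceIte, tsub_zero] <;> omega
  | capture c d hi hc hcap hd =>
    have hsum := List.sum_map_length_set [] hi
    have hmem : s.board.getD i [] ∈ s.board := by
      rw [List.getD_eq_getElem _ _ hi]
      exact List.getElem_mem hi
    generalize s.board.getD i [] = π at hsum hcap hd hmem ⊢
    rw [List.length_nil, add_zero] at hsum
    rw [hact] at hc
    have hcleared : (longPiles Color.r (s.board.set i [])).length = 0 := by
      have := List.countP_set_le_of_eq_false s.board i (isLongPile_nil Color.r)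
      rwa [length_longPiles, ← Nat.le_zero, ← hlong]
    cases c with
    | r =>
      obtain rfl := eq_singleton_of_countP_isLongPile_eq_zero hlong hmem hcap
      obtain rfl : d = Color.r := by simpa using hd
      refine ⟨?_, Or.inr ⟨rfl, hcleared, ?_⟩⟩ <;>
        simp only [redWeight, chipCount, totalChips, hact, reduceCtorEq, and_true, and_false,
          and_self, ↓reduceIte, tsub_zero, add_zero, List.count_cons_self, List.count_nil,
          List.count_cons_of_ne (by decide : Color.r ≠ Color.b), List.length_singleton] at hsum ⊢ <;>
        omega
    | b =>
      have hcount : 0 < π.count Color.b := List.count_pos_iff.2 (List.mem_of_mem_head? hcap)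
      have hlen := Color.count_b_add_count_r π
      have hdr : d = Color.r → 0 < π.count Color.r := by
        rintro rfl
        exact List.count_pos_iff.2 (by simpa using hd)
      cases d <;> refine ⟨?_, Or.inl ⟨rfl, hcleared.trans_le zero_le_one, ?_, ?_⟩⟩ <;>
        simp only [redWeight, chipCount, totalChips, hact, reduceCtorEq, and_true, and_false,
          and_self, ↓reduceIte, tsub_zero, add_zero, List.count_cons_self,
          List.count_cons_of_ne (by decide : Color.b ≠ Color.r), forall_const] at hdr ⊢ <;> omega

theorem step {s' : GState} (hstep : Step s s') :
    redWeight s' < redWeight s ∧ (BlueInv s' ∨ RedInv s') := by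
  obtain ⟨hact, hlong, hred⟩ := hs
  cases hstep with
  | place i _ _ hp => exact placeOn ⟨hact, hlong, hred⟩ hp
  | discardPrisoner _ hc =>
    rw [hact, Color.other] at hc
    refine ⟨?_, Or.inr ⟨hact, hlong, ?_⟩⟩ <;>
      simp only [redWeight, chipCount, totalChips, hact, Color.other, reduceCtorEq, and_true,
        and_false, ↓reduceIte, tsub_zero] <;> omega
  | donatePrisoner _ hc =>
    rw [hact, Color.other] at hc
    refine ⟨?_, Or.inr ⟨hact, hlong, ?_⟩⟩ <;>
      simp only [redWeight, chipCount, totalChips, hact, Color.other, reduceCtorEq,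
        ↓reduceIte] <;> omega

end RedInv

theorem RedInv.winsWithS {s : GState} (hs : RedInv s) : WinsWithS Color.b s := by
  have hturn : s.active ≠ Color.b := by rw [hs.active]; decide
  rcases Nat.eq_zero_or_pos (totalChips s s.active) with h0 | h0
  · exact .elim s hturn h0
  refine .theirs s hturn h0 fun s' hstep => ?_
  -- `hlt` and `hle` discharge the termination goals.
  obtain ⟨hlt, hB | hR⟩ := hs.step hstep
  · have hle := hB.redWeight_sRound_le
    exact .mine s' hB.active hB.guards_pos hB.sRound.winsWithS
  · exact hR.winsWithS
termination_by redWeight s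

theorem BlueInv.winsWithS {s : GState} (hs : BlueInv s) : WinsWithS Color.b s :=
  .mine s hs.active hs.guards_pos hs.sRound.winsWithS

theorem typeII_blue_wins_general (s : GState)
    (halt : Alternating s.board)
    (hactive : s.active = Color.b)
    (hII₁ : (longPiles Color.r s.board).length = 1)
    (hmb : 0 < s.chips Color.b Color.b)
    (h : s.chips Color.r Color.r
        < s.chips Color.b Color.b + longSum Color.b s.board) :
    WinsWithS Color.b s := by
  have hgain := longSum_le_roundGain halt
  rw [hactive] at hgain
  exact BlueInv.winsWithS ⟨hactive, hII₁.le, hmb, by omega⟩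

/-- **Type II, Blue winning condition.**  Let the board be of type II (all
piles alternating, exactly one long `r`-pile `ρ` and exactly one long
`b`-pile `β`) and let Blue be the active player.  If `m_b > 0` and
`m_b + |β|_b > n_r` when Blue's turn starts, then Blue wins by applying
strategy `S` at every round. -/
theorem typeII_blue_wins (s : GState)
    (halt : Alternating s.board)
    (hroom : chipCount s ≤ s.board.length)
    (hactive : s.active = Color.b)
    (hII₁ : (longPiles Color.r s.board).length = 1)
    (hII₂ : (longPiles Color.b s.board).length = 1)
    (hmb : 0 < s.chips Color.b Color.b)
    (h : s.chips Color.r Color.r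
        < s.chips Color.b Color.b + longSum Color.b s.board) :
    WinsWithS Color.b s :=
  typeII_blue_wins_general s halt hactive hII₁ hmb h
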